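/- For every integer n ≥ 2 and every integer k ≥ 1, the coalescence manifold satisfies C_{n,k} ⊆ C_{n,2n−1}. Consequently, the expected first-coalescence-time vector of a sample of size n under any piecewise-constant demography, with any number of epochs, can be realized by a piecewise-constant demography with at most 2n−1 epochs. -/

import Mathlib

/-!
Writing `a_p = x₁ ⋯ x_p` (with `x_k = 0`), the `m`-th coordinate of `χ_{n,k}(x, y)` is
`(1/t) ∑_p y_{p+1} (a_p^t - a_{p+1}^t)` with `t = C(m,2)`, a positive combination of the vectors
`(a_p^t - a_{p+1}^t)_t` attached to the epochs `1 = a_0 > a_1 > ⋯ > a_k = 0`. Splitting an epoch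
in two with the same weight does not change the vector, so epochs can always be added. Conversely,
let `ε` be the least weight: by Carathéodory's theorem for cones in `ℝ^{n-1}` the excess weights
`y - ε` can be carried by at most `n - 1` epochs, so once there are `2n` epochs two adjacent ones
both have weight `ε` and can be merged.
-/

open Finset

/-- The map `χ_{n,k}`: given breakpoint parameters `x` (used at indices `1, …, k-1`, with the
convention `x_k = 0`) and population sizes `y` (used at indices `1, …, k`), its coordinate
indexed by `i : Fin (n-1)` (corresponding to `m = i + 2`, `m = 2, …, n`) is
`c_m = (1/C(m,2)) ∑_{j=1}^k y_j (∏_{l=1}^{j-1} x_l^{C(m,2)}) (1 - x_j^{C(m,2)})`. -/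
noncomputable def chi (n k : ℕ) (x y : ℕ → ℝ) : Fin (n - 1) → ℝ :=
  fun i =>
    (1 / ((i.val + 2).choose 2 : ℝ)) *
      ∑ j ∈ Finset.Icc 1 k,
        y j * (∏ l ∈ Finset.Icc 1 (j - 1), x l ^ (i.val + 2).choose 2) *
          (1 - (if j = k then (0 : ℝ) else x j) ^ (i.val + 2).choose 2)

/-- The coalescence manifold `C_{n,k} ⊆ ℝ^{n-1}`: the image of `χ_{n,k}` over parameters
`x ∈ (0,1)^{k-1}`, `y ∈ (0,∞)^k`. -/
def Coal (n k : ℕ) : Set (Fin (n - 1) → ℝ) :=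
  { c | ∃ x y : ℕ → ℝ,
      (∀ j, 1 ≤ j → j ≤ k - 1 → 0 < x j ∧ x j < 1) ∧
      (∀ j, 1 ≤ j → j ≤ k → 0 < y j) ∧
      c = chi n k x y }

lemma sum_range_add_succ_add {M : Type*} [AddCommMonoid M] (f : ℕ → M) (q r : ℕ) :
    ∑ p ∈ range (q + 1 + r), f p = ∑ p ∈ range q, f p + f q + ∑ p ∈ range r, f (q + 1 + p) := by
  rw [sum_range_add, sum_range_succ]

lemma sum_Icc_one_eq_sum_range {M : Type*} [AddCommMonoid M] (f : ℕ → M) (k : ℕ) :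
    ∑ j ∈ Icc 1 k, f j = ∑ p ∈ range k, f (p + 1) := by
  rw [range_eq_Ico, sum_Ico_add', zero_add, Ico_add_one_right_eq_Icc]

lemma exists_consecutive_notMem (S : Finset ℕ) {m : ℕ} (hm : 2 * #S + 1 ≤ m) :
    ∃ q < m, q ∉ S ∧ q + 1 ∉ S := by
  by_contra! h
  have hsub : range (#S + 1) ⊆ S.image (· / 2) := fun i hi => by
    rw [mem_range] at hi
    rw [mem_image]
    by_cases h2i : 2 * i ∈ S
    · exact ⟨2 * i, h2i, by omega⟩
    · exact ⟨2 * i + 1, h _ (by omega) h2i, by omega⟩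
  simpa using (card_le_card hsub).trans card_image_le

def natSuccAbove (r p : ℕ) : ℕ := if p < r then p else p + 1

lemma natSuccAbove_strictMono (r : ℕ) : StrictMono (natSuccAbove r) :=
  strictMono_nat_of_lt_succ fun p => by unfold natSuccAbove; split_ifs <;> omega

lemma natSuccAbove_of_lt {r p : ℕ} (h : p < r) : natSuccAbove r p = p := if_pos h

lemma natSuccAbove_of_le {r p : ℕ} (h : r ≤ p) : natSuccAbove r p = p + 1 := if_neg h.not_gt

section ConicCaratheodory

variable {𝕜 W ι : Type*} [Field 𝕜] [LinearOrder 𝕜] [IsStrictOrderedRing 𝕜]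
  [AddCommGroup W] [Module 𝕜 W]

/-- Moving along a linear relation `g` until the first coefficient hits zero. -/
lemma exists_nonneg_sum_erase_smul_eq [DecidableEq ι] {f : ι → W} {s : Finset ι} {c g : ι → 𝕜}
    (hc : ∀ i ∈ s, 0 ≤ c i) (hg : ∑ i ∈ s, g i • f i = 0) (hpos : ∃ i ∈ s, 0 < g i) :
    ∃ i₀ ∈ s, ∃ c' : ι → 𝕜, (∀ i ∈ s.erase i₀, 0 ≤ c' i) ∧
      ∑ i ∈ s.erase i₀, c' i • f i = ∑ i ∈ s, c i • f i := by
  obtain ⟨i₀, hi₀, hmin⟩ := exists_min_image (s.filter (0 < g ·)) (fun i => c i / g i)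
    (by simpa [Finset.filter_nonempty_iff] using hpos)
  rw [mem_filter] at hi₀
  set r := c i₀ / g i₀
  have hr : 0 ≤ r := div_nonneg (hc i₀ hi₀.1) hi₀.2.le
  refine ⟨i₀, hi₀.1, fun i => c i - r * g i, fun i hi => ?_, ?_⟩
  · have hi := mem_of_mem_erase hi
    rcases lt_or_ge 0 (g i) with hgi | hgi
    · have := (le_div_iff₀ hgi).mp (hmin i (mem_filter.mpr ⟨hi, hgi⟩))
      linarith
    · nlinarith [hc i hi]
  · have hzero : c i₀ - r * g i₀ = 0 := by
      rw [div_mul_cancel₀ _ hi₀.2.ne', sub_self]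
    rw [sum_erase _ (by simp only [hzero, zero_smul])]
    simp only [sub_smul, sum_sub_distrib, mul_smul, ← smul_sum, hg, smul_zero, sub_zero]

/-- Carathéodory's theorem for cones. -/
theorem exists_linearIndepOn_nonneg_sum_smul_eq (f : ι → W) (s : Finset ι) (c : ι → 𝕜)
    (hc : ∀ i ∈ s, 0 ≤ c i) :
    ∃ t ⊆ s, LinearIndepOn 𝕜 f (t : Set ι) ∧ ∃ d : ι → 𝕜, (∀ i ∈ t, 0 ≤ d i) ∧
      ∑ i ∈ t, d i • f i = ∑ i ∈ s, c i • f i := by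
  classical
  induction s using Finset.strongInduction generalizing c with
  | H s ih =>
  by_cases hind : LinearIndepOn 𝕜 f (s : Set ι)
  · exact ⟨s, subset_rfl, hind, c, hc, rfl⟩
  obtain ⟨g, hg, i, hi, hgi⟩ := not_linearIndepOn_finset_iff.mp hind
  have hrel : ∃ g : ι → 𝕜, ∑ i ∈ s, g i • f i = 0 ∧ ∃ i ∈ s, 0 < g i := by
    rcases hgi.lt_or_gt with hneg | hpos
    · exact ⟨-g, by simp [neg_smul, hg], i, hi, by simpa using hneg⟩
    · exact ⟨g, hg, i, hi, hpos⟩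
  obtain ⟨g, hg, hpos⟩ := hrel
  obtain ⟨i₀, hi₀, c', hc', hsum⟩ := exists_nonneg_sum_erase_smul_eq hc hg hpos
  obtain ⟨t, hts, ht, d, hd, hdsum⟩ := ih _ (erase_ssubset hi₀) c' hc'
  exact ⟨t, hts.trans (erase_subset _ _), ht, d, hd, hdsum.trans hsum⟩

end ConicCaratheodory

section EpochProfile

variable {ι : Type*}

structure IsEpochProfile (m : ℕ) (a w : ℕ → ℝ) : Prop where
  a_zero : a 0 = 1
  a_last : a m = 0
  strictAntiOn : StrictAntiOn a (Set.Iic m)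
  w_pos : ∀ p < m, 0 < w p

def epochVec (e : ι → ℕ) (m : ℕ) (a w : ℕ → ℝ) (i : ι) : ℝ :=
  ∑ p ∈ range m, w p * (a p ^ e i - a (p + 1) ^ e i)

def epochVecs (e : ι → ℕ) (m : ℕ) : Set (ι → ℝ) :=
  {v | ∃ a w, IsEpochProfile m a w ∧ epochVec e m a w = v}

lemma IsEpochProfile.a_pos {m : ℕ} {a w : ℕ → ℝ} (h : IsEpochProfile m a w) {p : ℕ} (hp : p < m) :
    0 < a p := by
  simpa [h.a_last] using h.strictAntiOn (Set.mem_Iic.mpr hp.le) Set.self_mem_Iic hp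

lemma IsEpochProfile.a_succ_lt {m : ℕ} {a w : ℕ → ℝ} (h : IsEpochProfile m a w) {p : ℕ}
    (hp : p < m) : a (p + 1) < a p :=
  h.strictAntiOn (Set.mem_Iic.mpr hp.le) (Set.mem_Iic.mpr hp) (Nat.lt_succ_self p)

lemma epochVec_congr {e : ι → ℕ} {m : ℕ} {a a' w w' : ℕ → ℝ} (ha : ∀ p ≤ m, a p = a' p)
    (hw : ∀ p < m, w p = w' p) : epochVec e m a w = epochVec e m a' w' := by
  funext i
  exact sum_congr rfl fun p hp => by
    rw [mem_range] at hp
    rw [ha p hp.le, ha (p + 1) hp, hw p hp]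

lemma epochVec_eq_sum_smul (e : ι → ℕ) (m : ℕ) (a w : ℕ → ℝ) :
    epochVec e m a w = ∑ p ∈ range m, w p • fun i => a p ^ e i - a (p + 1) ^ e i := by
  funext i
  simp [epochVec, Finset.sum_apply]

/-- Composing with `natSuccAbove (q + 1)` deletes the breakpoint `a (q + 1)`, merging two
adjacent epochs of equal weight. -/
lemma epochVec_comp_natSuccAbove (e : ι → ℕ) {m q : ℕ} (a w : ℕ → ℝ) (hq : q < m)
    (hw : w (q + 1) = w q) :
    epochVec e m (a ∘ natSuccAbove (q + 1)) (w ∘ natSuccAbove (q + 1)) =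
      epochVec e (m + 1) a w := by
  funext i
  obtain ⟨r, rfl⟩ := Nat.exists_eq_add_of_lt hq
  simp only [epochVec, Function.comp_apply]
  rw [show q + r + 1 + 1 = q + 1 + 1 + r by ring, show q + r + 1 = q + 1 + r by ring,
    sum_range_add_succ_add, sum_range_add_succ_add, sum_range_succ,
    natSuccAbove_of_lt (Nat.lt_succ_self q), natSuccAbove_of_le le_rfl, hw]
  have hlow (p : ℕ) (hp : p ∈ range q) :
      natSuccAbove (q + 1) p = p ∧ natSuccAbove (q + 1) (p + 1) = p + 1 := by
    rw [mem_range] at hp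
    exact ⟨natSuccAbove_of_lt (by omega), natSuccAbove_of_lt (by omega)⟩
  have hhigh (p : ℕ) : natSuccAbove (q + 1) (q + 1 + p) = q + 1 + 1 + p :=
    (natSuccAbove_of_le (by omega)).trans (by ring)
  have hhigh' (p : ℕ) : natSuccAbove (q + 1) (q + 1 + p + 1) = q + 1 + 1 + p + 1 :=
    (natSuccAbove_of_le (by omega)).trans (by ring)
  simp only [hhigh, hhigh']
  rw [sum_congr rfl fun p hp => by rw [(hlow p hp).1, (hlow p hp).2]]
  ring

lemma IsEpochProfile.comp_natSuccAbove {m q : ℕ} {a w : ℕ → ℝ} (h : IsEpochProfile (m + 1) a w)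
    (hq : q < m) : IsEpochProfile m (a ∘ natSuccAbove (q + 1)) (w ∘ natSuccAbove (q + 1)) where
  a_zero := by simp [natSuccAbove, h.a_zero]
  a_last := by simp [natSuccAbove_of_le (show q + 1 ≤ m by omega), h.a_last]
  strictAntiOn := strictAntiOn_Iic_of_succ_lt fun p hp => by
    have hlt := natSuccAbove_strictMono (q + 1) (Nat.lt_succ_self p)
    have hle : natSuccAbove (q + 1) (p + 1) ≤ m + 1 := by unfold natSuccAbove; split_ifs <;> omega
    exact h.strictAntiOn (Set.mem_Iic.mpr (hlt.le.trans hle)) (Set.mem_Iic.mpr hle) hlt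
  w_pos p hp := h.w_pos _ (by unfold natSuccAbove; split_ifs <;> omega)

lemma epochVecs_subset_succ (e : ι → ℕ) {m : ℕ} (hm : 1 ≤ m) :
    epochVecs e m ⊆ epochVecs e (m + 1) := by
  rintro _ ⟨a, w, h, rfl⟩
  set a' : ℕ → ℝ := fun | 0 => 1 | 1 => (1 + a 1) / 2 | p + 2 => a (p + 1)
  set w' : ℕ → ℝ := fun | 0 => w 0 | p + 1 => w p
  have ha : a' ∘ natSuccAbove 1 = a := funext fun
    | 0 => h.a_zero.symm
    | p + 1 => by simp [a', natSuccAbove_of_le (Nat.le_add_left 1 p)]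
  have hw : w' ∘ natSuccAbove 1 = w := funext fun
    | 0 => rfl
    | p + 1 => by simp [w', natSuccAbove_of_le (Nat.le_add_left 1 p)]
  have h1 : a 1 < 1 := h.a_zero ▸ h.a_succ_lt hm
  obtain ⟨m, rfl⟩ := Nat.exists_eq_add_of_le' hm
  have h' : IsEpochProfile (m + 1 + 1) a' w' := by
    refine ⟨rfl, h.a_last, strictAntiOn_Iic_of_succ_lt fun p hp => ?_, fun p hp => ?_⟩
    · rw [Order.succ_eq_add_one]
      rcases p with _ | _ | p
      · change (1 + a 1) / 2 < 1
        linarith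
      · change a 1 < (1 + a 1) / 2
        linarith
      · exact h.a_succ_lt (by omega)
    · rcases p with _ | p
      · exact h.w_pos 0 (by omega)
      · exact h.w_pos p (by omega)
  refine ⟨a', w', h', ?_⟩
  rw [← epochVec_comp_natSuccAbove e a' w' (Nat.succ_pos m) rfl, ha, hw]

/-- Conic Carathéodory applied to the excess of the weights over their minimum `ε`. -/
lemma IsEpochProfile.exists_reweight_const_off [Fintype ι] (e : ι → ℕ) {m : ℕ} {a w : ℕ → ℝ}
    (h : IsEpochProfile m a w) :
    ∃ S : Finset ℕ, #S ≤ Fintype.card ι ∧ ∃ ε : ℝ, ∃ w' : ℕ → ℝ, (∀ p ∉ S, w' p = ε) ∧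
      IsEpochProfile m a w' ∧ epochVec e m a w' = epochVec e m a w := by
  have hm : (range m).Nonempty := nonempty_range_iff.mpr fun hm0 => by
    simpa [hm0, h.a_zero] using h.a_last
  set ε := (range m).inf' hm w
  have hε : ∀ p ∈ range m, ε ≤ w p := fun p hp => inf'_le w hp
  have hεpos : 0 < ε := (lt_inf'_iff hm).mpr fun p hp => h.w_pos p (mem_range.mp hp)
  set f : ℕ → ι → ℝ := fun p i => a p ^ e i - a (p + 1) ^ e i
  obtain ⟨S, hSm, hSind, d, hd, hsum⟩ := exists_linearIndepOn_nonneg_sum_smul_eq f (range m)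
    (fun p => w p - ε) fun p hp => sub_nonneg.mpr (hε p hp)
  have hcard : #S ≤ Fintype.card ι := by
    simpa using hSind.fintype_card_le_finrank
  refine ⟨S, hcard, ε, fun p => ε + if p ∈ S then d p else 0, fun p hp => by simp [hp],
    ⟨h.a_zero, h.a_last, h.strictAntiOn, fun p _ => ?_⟩, ?_⟩
  · split_ifs with hp
    · linarith [hd p hp]
    · simpa using hεpos
  · simp only [epochVec_eq_sum_smul, add_smul, sum_add_distrib, ite_smul, zero_smul]
    rw [sum_ite_mem, inter_eq_right.mpr hSm, hsum]
    simp only [sub_smul, sum_sub_distrib, f]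
    abel

lemma epochVecs_succ_subset [Fintype ι] (e : ι → ℕ) {m : ℕ} (hm : 2 * Fintype.card ι + 1 ≤ m) :
    epochVecs e (m + 1) ⊆ epochVecs e m := by
  rintro _ ⟨a, w, h, rfl⟩
  obtain ⟨S, hS, ε, w', hw', h', hvec⟩ := h.exists_reweight_const_off e
  obtain ⟨q, hq, hqS, hq1S⟩ := exists_consecutive_notMem S (m := m) (by omega)
  exact ⟨_, _, h'.comp_natSuccAbove hq, by
    rw [epochVec_comp_natSuccAbove e a w' hq (by rw [hw' _ hq1S, hw' _ hqS]), hvec]⟩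

theorem epochVecs_subset_two_mul_card_add_one [Fintype ι] (e : ι → ℕ) {k : ℕ} (hk : 1 ≤ k) :
    epochVecs e k ⊆ epochVecs e (2 * Fintype.card ι + 1) := by
  rcases le_total k (2 * Fintype.card ι + 1) with hle | hle
  · exact Nat.le_induction subset_rfl
      (fun m hkm ih => ih.trans (epochVecs_subset_succ e (hk.trans hkm))) _ hle
  · exact Nat.le_induction (P := fun m _ => epochVecs e m ⊆ epochVecs e (2 * Fintype.card ι + 1))
      subset_rfl (fun m hm ih => (epochVecs_succ_subset e hm).trans ih) _ hle

end EpochProfile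

def lineagePairs (n : ℕ) (i : Fin (n - 1)) : ℕ := (i.val + 2).choose 2

lemma lineagePairs_ne_zero (n : ℕ) (i : Fin (n - 1)) : lineagePairs n i ≠ 0 :=
  (Nat.choose_pos (by omega)).ne'

def coalBreakpoints (k : ℕ) (x : ℕ → ℝ) (p : ℕ) : ℝ := ∏ l ∈ Icc 1 p, if l = k then 0 else x l

lemma coalBreakpoints_zero (k : ℕ) (x : ℕ → ℝ) : coalBreakpoints k x 0 = 1 := by
  simp [coalBreakpoints]

lemma coalBreakpoints_succ (k : ℕ) (x : ℕ → ℝ) (p : ℕ) :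
    coalBreakpoints k x (p + 1) = coalBreakpoints k x p * if p + 1 = k then 0 else x (p + 1) :=
  prod_Icc_succ_top (by omega) _

lemma chi_eq_epochVec (n k : ℕ) (x y : ℕ → ℝ) :
    chi n k x y = fun i => 1 / (lineagePairs n i : ℝ) *
      epochVec (lineagePairs n) k (coalBreakpoints k x) (fun p => y (p + 1)) i := by
  funext i
  simp only [chi, epochVec]
  congr 1
  rw [sum_Icc_one_eq_sum_range]
  refine sum_congr rfl fun p hp => ?_
  rw [mem_range] at hp
  have hprod : ∏ l ∈ Icc 1 (p + 1 - 1), x l ^ lineagePairs n i =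
      coalBreakpoints k x p ^ lineagePairs n i := by
    rw [Nat.add_sub_cancel, coalBreakpoints, ← prod_pow]
    exact prod_congr rfl fun l hl => by rw [if_neg (by rw [mem_Icc] at hl; omega)]
  rw [show (i.val + 2).choose 2 = lineagePairs n i from rfl, hprod, coalBreakpoints_succ]
  split_ifs
  · simp [zero_pow (lineagePairs_ne_zero n i)]
  · rw [mul_pow]
    ring

lemma isEpochProfile_coalBreakpoints {k : ℕ} (hk : 1 ≤ k) {x y : ℕ → ℝ}
    (hx : ∀ j, 1 ≤ j → j ≤ k - 1 → 0 < x j ∧ x j < 1) (hy : ∀ j, 1 ≤ j → j ≤ k → 0 < y j) :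
    IsEpochProfile k (coalBreakpoints k x) (fun p => y (p + 1)) := by
  have hpos : ∀ p < k, 0 < coalBreakpoints k x p := fun p hp =>
    prod_pos fun l hl => by
      rw [mem_Icc] at hl
      rw [if_neg (by omega)]
      exact (hx l hl.1 (by omega)).1
  refine ⟨coalBreakpoints_zero k x, prod_eq_zero (mem_Icc.mpr ⟨hk, le_rfl⟩) (if_pos rfl),
    strictAntiOn_Iic_of_succ_lt fun p hp => ?_, fun p hp => hy (p + 1) (by omega) hp⟩
  rw [Order.succ_eq_add_one, coalBreakpoints_succ]
  split_ifs with hpk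
  · simpa using hpos p hp
  · have := hx (p + 1) (by omega) (by omega)
    exact mul_lt_of_lt_one_right (hpos p hp) this.2

lemma IsEpochProfile.coalBreakpoints_div_eq {k : ℕ} {a w : ℕ → ℝ} (h : IsEpochProfile k a w) {p : ℕ}
    (hp : p ≤ k) : coalBreakpoints k (fun j => a j / a (j - 1)) p = a p := by
  induction p with
  | zero => rw [coalBreakpoints_zero, h.a_zero]
  | succ p ih =>
    rw [coalBreakpoints_succ, ih (by omega)]
    split_ifs with hpk
    · rw [mul_zero, hpk, h.a_last]
    · rw [Nat.add_sub_cancel, mul_div_cancel₀ _ (h.a_pos (by omega)).ne']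

lemma coal_eq_image {n k : ℕ} (hk : 1 ≤ k) :
    Coal n k = (fun v i => 1 / (lineagePairs n i : ℝ) * v i) '' epochVecs (lineagePairs n) k := by
  ext c
  constructor
  · rintro ⟨x, y, hx, hy, rfl⟩
    exact ⟨_, ⟨_, _, isEpochProfile_coalBreakpoints hk hx hy, rfl⟩, (chi_eq_epochVec n k x y).symm⟩
  · rintro ⟨_, ⟨a, w, h, rfl⟩, rfl⟩
    refine ⟨fun j => a j / a (j - 1), fun j => w (j - 1), fun j hj hjk => ?_,
      fun j hj hjk => h.w_pos _ (by omega), ?_⟩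
    · have hlt := h.a_succ_lt (show j - 1 < k by omega)
      rw [Nat.sub_add_cancel hj] at hlt
      have hja := h.a_pos (show j < k by omega)
      exact ⟨div_pos hja (hja.trans hlt), (div_lt_one (hja.trans hlt)).mpr hlt⟩
    · rw [chi_eq_epochVec,
        epochVec_congr (fun p hp => h.coalBreakpoints_div_eq hp) (fun p _ => rfl)]
      rfl

theorem coal_subset_two_n_sub_one (n k : ℕ) (hn : 2 ≤ n) (hk : 1 ≤ k) :
    Coal n k ⊆ Coal n (2 * n - 1) := by
  rw [coal_eq_image hk, coal_eq_image (by omega : 1 ≤ 2 * n - 1)]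
  have h := epochVecs_subset_two_mul_card_add_one (lineagePairs n) hk
  rw [Fintype.card_fin, show 2 * (n - 1) + 1 = 2 * n - 1 by omega] at h
  exact Set.image_mono h
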